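/- Let $M$ be a normal pseudomanifold of dimension $d \geq 2$ and let $A$ be a set of vertices of $M$ such that the induced subcomplex $M[A]$ is a $(d-1)$-dimensional normal pseudomanifold. Let $G$ be the graph whose vertices are the edges of $M$ with exactly one end in $A$, two such vertices being adjacent in $G$ if the union of the corresponding edges is a 2-dimensional face of $M$. Then $G$ has at most two connected components. -/

import Mathlib

/-!
Fix a facet `σ₀` of `M[A]` and `a₀ ∈ σ₀`. As a ridge of `M`, `σ₀` lies in exactly two facets
`σ₀ ∪ {x₁}` and `σ₀ ∪ {x₂}`; every cross edge is joined to `{a₀, x₁}` or to `{a₀, x₂}`.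

Two cross edges spanning a triangle of `M` are adjacent. Starting from a cross edge `{a, b}`,
walk in the connected link of a face `γ ⊆ A` from `b` towards a vertex of `A`; the first vertex
of `A` met enlarges `γ`. Iterating, every cross edge reaches a side edge `{a, x}` of some facet
`σ` of `M[A]` (`a ∈ σ`, `x ∉ A`, `σ ∪ {x} ∈ M`). Normal pseudomanifolds are strongly connected,
so `σ` is joined to `σ₀` by facets of `M[A]` consecutively sharing ridges `τ`. The link of such a
`τ` in `M` is a cycle whose only vertices in `A` are the two apexes over `τ`, so the arc leaving
one apex through `x` reaches a neighbour of the other apex without meeting `A`; this carries a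
side edge of one facet to a side edge of the next.
-/

open Finset

noncomputable section

attribute [local instance] Classical.propDecidable

variable {V : Type} [DecidableEq V]

/-- A (finite abstract) simplicial complex: a finite family of nonempty finite sets (faces)
closed under taking nonempty subsets. -/
def IsComplex (K : Finset (Finset V)) : Prop :=
  (∀ s ∈ K, s.Nonempty) ∧ ∀ s ∈ K, ∀ t ⊆ s, t.Nonempty → t ∈ K

/-- The vertex set of a complex: the union of its faces. -/
def vertexSet (K : Finset (Finset V)) : Finset V := K.sup id

/-- A facet is a maximal face. -/
def IsFacet (K : Finset (Finset V)) (s : Finset V) : Prop :=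
  s ∈ K ∧ ∀ t ∈ K, s ⊆ t → s = t

/-- A complex is pure of dimension `d` if it is nonempty and every facet has `d + 1` vertices. -/
def IsPure (K : Finset (Finset V)) (d : ℕ) : Prop :=
  K.Nonempty ∧ ∀ s, IsFacet K s → s.card = d + 1

/-- The edge graph (1-skeleton) of a complex. -/
def edgeGraph (K : Finset (Finset V)) : SimpleGraph V where
  Adj x y := x ≠ y ∧ ({x, y} : Finset V) ∈ K
  symm := by
    constructor
    intro x y h
    refine ⟨h.1.symm, ?_⟩
    rw [Finset.pair_comm]
    exact h.2
  loopless := by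
    constructor
    intro x h
    exact h.1 rfl

/-- A complex is connected if it has a vertex and any two of its vertices are joined by a
path in its edge graph. -/
def CConnected (K : Finset (Finset V)) : Prop :=
  (vertexSet K).Nonempty ∧
    ∀ u ∈ vertexSet K, ∀ v ∈ vertexSet K, (edgeGraph K).Reachable u v

/-- The link of a face `α`: all faces `β` disjoint from `α` with `α ∪ β` a face. -/
def link (K : Finset (Finset V)) (α : Finset V) : Finset (Finset V) :=
  K.filter fun β => Disjoint α β ∧ α ∪ β ∈ K

/-- The number of edges (1-dimensional faces) of a complex. -/
def edgeCount (K : Finset (Finset V)) : ℕ := (K.filter fun s => s.card = 2).card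

/-- A weak pseudomanifold of dimension `d`: a pure `d`-dimensional complex in which every
`(d-1)`-dimensional face lies in exactly two facets. -/
def IsWeakPM (K : Finset (Finset V)) (d : ℕ) : Prop :=
  IsComplex K ∧ IsPure K d ∧
    ∀ s ∈ K, s.card = d → (K.filter fun t => IsFacet K t ∧ s ⊆ t).card = 2

/-- A normal `d`-pseudomanifold: a connected weak pseudomanifold of dimension `d` in which
the link of every face of dimension at most `d - 2` is connected. -/
def IsNormalPM (K : Finset (Finset V)) (d : ℕ) : Prop :=
  IsWeakPM K d ∧ CConnected K ∧
    ∀ s ∈ K, s.card ≤ d - 1 → CConnected (link K s)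

/-- The standard `d`-sphere: the complex of all nonempty proper subsets of a `(d+2)`-set. -/
def IsStandardSphere (K : Finset (Finset V)) (d : ℕ) : Prop :=
  ∃ A : Finset V, A.card = d + 2 ∧ K = A.powerset.filter fun s => s.Nonempty ∧ s ≠ A

/-- `StarringOf X Y` : `Y` is obtained from `X` by starring a new vertex `v` in a facet
`σ` of `X`, i.e. by replacing the facet `σ` with the cone with apex `v` over its boundary. -/
def StarringOf (X Y : Finset (Finset V)) : Prop :=
  ∃ (σ : Finset V) (v : V), IsFacet X σ ∧ v ∉ vertexSet X ∧
    Y = X.erase σ ∪ (σ.powerset.filter fun τ => τ ≠ σ).image fun τ => insert v τ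

/-- A stacked `d`-sphere: a complex obtained from the standard `d`-sphere by a finite
sequence of starrings. -/
def IsStackedSphere (K : Finset (Finset V)) (d : ℕ) : Prop :=
  ∃ S : Finset (Finset V), IsStandardSphere S d ∧ Relation.ReflTransGen StarringOf S K

/-- The induced subcomplex on a set `U` of vertices. -/
def induced (K : Finset (Finset V)) (U : Finset V) : Finset (Finset V) :=
  K.filter fun s => s ⊆ U

/-- The simplicial complement of the induced subcomplex on `U`: the induced subcomplex on
the complementary set of vertices. -/
def simpComplement (K : Finset (Finset V)) (U : Finset V) : Finset (Finset V) :=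
  induced K (vertexSet K \ U)

/-- The degree of a vertex: the number of vertices of its link. -/
def vertDegree (K : Finset (Finset V)) (v : V) : ℕ := (vertexSet (link K {v})).card

/-- `farApart G x y` : the distance from `x` to `y` in the graph `G` is at least `3`
(where unreachable counts as infinite distance). -/
def farApart (G : SimpleGraph V) (x y : V) : Prop :=
  x ≠ y ∧ ¬ G.Adj x y ∧ ∀ z : V, ¬ (G.Adj x z ∧ G.Adj z y)

/-- `Admissible X σ₁ σ₂ ψ` : `σ₁, σ₂` are disjoint facets of `X` and `ψ` restricts to a
bijection from `σ₁` onto `σ₂` moving every `x ∈ σ₁` to distance at least 3 from itself. -/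
def Admissible (X : Finset (Finset V)) (σ₁ σ₂ : Finset V) (ψ : V → V) : Prop :=
  IsFacet X σ₁ ∧ IsFacet X σ₂ ∧ Disjoint σ₁ σ₂ ∧ Set.BijOn ψ ↑σ₁ ↑σ₂ ∧
    ∀ x ∈ σ₁, farApart (edgeGraph X) x (ψ x)

/-- Elementary handle addition `X^ψ`: remove the two facets `σ₁, σ₂` and identify each
`x ∈ σ₁` with `ψ x ∈ σ₂`. -/
def handleAdd (X : Finset (Finset V)) (σ₁ σ₂ : Finset V) (ψ : V → V) :
    Finset (Finset V) :=
  ((X.erase σ₁).erase σ₂).image fun s => s.image fun x => if x ∈ σ₁ then ψ x else x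

/-- Isomorphism of simplicial complexes: an injection on vertices carrying the faces of one
complex exactly onto the faces of the other. -/
def CplxIso {W : Type} [DecidableEq W] (K : Finset (Finset V)) (L : Finset (Finset W)) :
    Prop :=
  ∃ f : V → W, Set.InjOn f ↑(vertexSet K) ∧ L = K.image fun s => s.image f

/-- The connected component of the complex `K` containing the vertex `v` (as a subcomplex). -/
def componentOf (K : Finset (Finset V)) (v : V) : Finset (Finset V) :=
  K.filter fun s => ∀ x ∈ s, (edgeGraph K).Reachable v x

/-- The edges of `M` having exactly one end in `A`. -/
def crossEdges (M : Finset (Finset V)) (A : Finset V) : Finset (Finset V) :=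
  M.filter fun e => e.card = 2 ∧ (e ∩ A).card = 1

/-- The graph whose vertices are the edges of `M` with exactly one end in `A`, two of them
being adjacent when the union of the corresponding edges is a 2-dimensional face of `M`. -/
def crossGraph (M : Finset (Finset V)) (A : Finset V) : SimpleGraph (Finset V) where
  Adj e f := e ≠ f ∧ e ∈ crossEdges M A ∧ f ∈ crossEdges M A ∧
    e ∪ f ∈ M ∧ (e ∪ f).card = 3
  symm := by
    constructor
    intro e f h
    obtain ⟨h1, h2, h3, h4, h5⟩ := h
    exact ⟨h1.symm, h3, h2, by rwa [Finset.union_comm], by rwa [Finset.union_comm]⟩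
  loopless := by
    constructor
    intro e h
    exact h.1 rfl

/-- The class `𝒦(d)`: normal `d`-pseudomanifolds all of whose vertex links are stacked
`(d-1)`-spheres. -/
def InClassK (K : Finset (Finset V)) (d : ℕ) : Prop :=
  IsNormalPM K d ∧ ∀ v ∈ vertexSet K, IsStackedSphere (link K {v}) (d - 1)

/-- The total number of partitions of `n`. -/
def numPartitions (n : ℕ) : ℕ := Fintype.card (Nat.Partition n)

/-- The number of even partitions of `n` (those with an even number of even parts). -/
def numEvenPartitions (n : ℕ) : ℕ :=
  Fintype.card {p : Nat.Partition n // Even (Multiset.card (p.parts.filter fun i => Even i))}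

/-- The number of odd partitions of `n` (those with an odd number of even parts). -/
def numOddPartitions (n : ℕ) : ℕ :=
  Fintype.card {p : Nat.Partition n // Odd (Multiset.card (p.parts.filter fun i => Even i))}

/-- The facets of `N^{d+1}_{m+d+1}` : the sets of `d+2` consecutive integers inside
`{1, …, m+d+1}`. -/
def NFacets (d m : ℕ) : Finset (Finset ℕ) :=
  (Finset.Icc 1 m).image fun k => Finset.Icc k (k + d + 1)

/-- The complex `N^{d+1}_{m+d+1}` on vertex set `{1, …, m+d+1}` whose facets are the sets
of `d+2` consecutive integers. -/
def Ncomplex (d m : ℕ) : Finset (Finset ℕ) :=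
  ((NFacets d m).biUnion Finset.powerset).filter fun s => s.Nonempty

/-- The facets of the boundary complex `∂N^{d+1}_{m+d+1}` : the `(d+1)`-element subsets of
`{1, …, m+d+1}` contained in exactly one facet of `N^{d+1}_{m+d+1}`. -/
def boundaryNFacets (d m : ℕ) : Finset (Finset ℕ) :=
  (Finset.Icc 1 (m + d + 1)).powerset.filter fun s =>
    s.card = d + 1 ∧ ((Finset.Icc 1 m).filter fun k => s ⊆ Finset.Icc k (k + d + 1)).card = 1

/-- The boundary complex `∂N^{d+1}_{m+d+1}`. -/
def boundaryN (d m : ℕ) : Finset (Finset ℕ) :=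
  ((boundaryNFacets d m).biUnion Finset.powerset).filter fun s => s.Nonempty

open Relation

section Complexes

variable {K : Finset (Finset V)} {n : ℕ} {s : Finset V} {v : V}

@[simp]
lemma mem_vertexSet : v ∈ vertexSet K ↔ ∃ s ∈ K, v ∈ s := by
  simp [vertexSet]

@[simp]
lemma mem_induced {U : Finset V} : s ∈ induced K U ↔ s ∈ K ∧ s ⊆ U :=
  mem_filter

lemma exists_isFacet_superset (hs : s ∈ K) : ∃ t, s ⊆ t ∧ IsFacet K t := by
  obtain ⟨t, ht, hmax⟩ := {t ∈ K | s ⊆ t}.exists_max_image card ⟨s, by simp [hs]⟩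
  rw [mem_filter] at ht
  exact ⟨t, ht.2, ht.1, fun u hu htu =>
    eq_of_subset_of_card_le htu (hmax u (mem_filter.2 ⟨hu, ht.2.trans htu⟩))⟩

lemma IsPure.card_le (hP : IsPure K n) (hs : s ∈ K) : #s ≤ n + 1 := by
  obtain ⟨t, hst, ht⟩ := exists_isFacet_superset hs
  exact hP.2 t ht ▸ card_le_card hst

lemma IsPure.isFacet_of_card (hP : IsPure K n) (hs : s ∈ K) (hc : #s = n + 1) :
    IsFacet K s :=
  ⟨hs, fun _ ht hst => eq_of_subset_of_card_le hst (hc ▸ hP.card_le ht)⟩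

lemma IsWeakPM.exists_insert_mem_iff (hW : IsWeakPM K n) (hs : s ∈ K) (hc : #s = n) :
    ∃ x y, x ≠ y ∧ x ∉ s ∧ y ∉ s ∧ ∀ z ∉ s, insert z s ∈ K ↔ z = x ∨ z = y := by
  obtain ⟨F₁, F₂, hne, hF⟩ := card_eq_two.1 (hW.2.2 s hs hc)
  have hmem (F : Finset V) : IsFacet K F ∧ s ⊆ F ↔ F = F₁ ∨ F = F₂ := by
    have := congrArg (F ∈ ·) hF
    simp only [mem_filter, mem_insert, mem_singleton, eq_iff_iff] at this
    exact ⟨fun h => this.1 ⟨h.1.1, h⟩, fun h => (this.2 h).2⟩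
  have hapex (F : Finset V) (hF : F = F₁ ∨ F = F₂) : ∃ x ∉ s, insert x s = F := by
    obtain ⟨hFf, hsF⟩ := (hmem F).2 hF
    exact exists_eq_insert_iff.2 ⟨hsF, by rw [hW.2.1.2 F hFf, hc]⟩
  obtain ⟨x, hx, rfl⟩ := hapex F₁ (.inl rfl)
  obtain ⟨y, hy, rfl⟩ := hapex F₂ (.inr rfl)
  refine ⟨x, y, fun h => hne (h ▸ rfl), hx, hy, fun z hz => ?_⟩
  rw [← insert_inj hz, ← insert_inj hz, ← hmem]
  refine ⟨fun h => ⟨hW.2.1.isFacet_of_card h ?_, subset_insert z s⟩, fun h => h.1.1⟩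
  rw [card_insert_of_notMem hz, hc]

end Complexes

section Links

variable {K : Finset (Finset V)} {s τ F : Finset V} {v p q : V}

@[simp]
lemma mem_link {α β : Finset V} : β ∈ link K α ↔ β ∈ K ∧ Disjoint α β ∧ α ∪ β ∈ K := by
  simp [link]

lemma IsComplex.link (hK : IsComplex K) (α : Finset V) : IsComplex (link K α) := by
  refine ⟨fun s hs => hK.1 s (mem_link.1 hs).1, fun s hs t hts ht => ?_⟩
  obtain ⟨hsK, hdisj, hu⟩ := mem_link.1 hs
  exact mem_link.2 ⟨hK.2 s hsK t hts ht, hdisj.mono_right hts,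
    hK.2 _ hu _ (union_subset_union_right hts) (ht.mono subset_union_right)⟩

lemma mem_vertexSet_link (hK : IsComplex K) :
    p ∈ vertexSet (link K τ) ↔ p ∉ τ ∧ insert p τ ∈ K := by
  simp only [mem_vertexSet, mem_link]
  constructor
  · rintro ⟨β, ⟨-, hdisj, hu⟩, hp⟩
    refine ⟨disjoint_right.1 hdisj hp, hK.2 _ hu _ ?_ ⟨p, mem_insert_self p τ⟩⟩
    exact insert_subset (mem_union_right τ hp) subset_union_left
  · rintro ⟨hp, hpK⟩
    refine ⟨{p}, ⟨hK.2 _ hpK {p} (by simp) (by simp), by simpa using hp, ?_⟩, mem_singleton_self p⟩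
    rwa [union_comm, ← insert_eq]

lemma edgeGraph_link_adj (hK : IsComplex K) :
    (edgeGraph (link K τ)).Adj p q ↔ p ≠ q ∧ p ∉ τ ∧ q ∉ τ ∧ insert p (insert q τ) ∈ K := by
  have hpq : τ ∪ {p, q} = insert p (insert q τ) := by ext; simp
  simp only [edgeGraph, mem_link, disjoint_insert_right, disjoint_singleton_right, hpq]
  constructor
  · rintro ⟨hne, -, ⟨hp, hq⟩, h⟩
    exact ⟨hne, hp, hq, h⟩
  · rintro ⟨hne, hp, hq, h⟩
    exact ⟨hne, hK.2 _ h _ (by intro z; simp; tauto) (by simp), ⟨hp, hq⟩, h⟩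

lemma link_link (hK : IsComplex K) (hv : v ∉ s) : link (link K {v}) s = link K (insert v s) := by
  ext β
  simp only [mem_link, insert_eq, disjoint_union_left, disjoint_singleton_left, union_assoc]
  constructor
  · rintro ⟨⟨hβ, hvβ, -⟩, hsβ, -, -, hu⟩
    exact ⟨hβ, ⟨hvβ, hsβ⟩, hu⟩
  · rintro ⟨hβ, ⟨hvβ, hsβ⟩, hu⟩
    have hne := hK.1 β hβ
    refine ⟨⟨hβ, hvβ, hK.2 _ hu _ ?_ (hne.mono subset_union_right)⟩, hsβ,
      hK.2 _ hu _ subset_union_right (hne.mono subset_union_right), ?_, hu⟩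
    · exact union_subset_union_right subset_union_right
    · simpa [disjoint_union_right] using ⟨hv, hvβ⟩

lemma isFacet_insert_of_isFacet_link (hK : IsComplex K) (hs : IsFacet (link K {v}) s) :
    IsFacet K (insert v s) := by
  obtain ⟨hsK, hvs, hu⟩ := mem_link.1 hs.1
  rw [← insert_eq] at hu
  rw [disjoint_singleton_left] at hvs
  refine ⟨hu, fun F hF hsF => ?_⟩
  have hvF : v ∈ F := hsF (mem_insert_self v s)
  have hsF' : s ⊆ F.erase v := fun z hz =>
    mem_erase.2 ⟨fun h => hvs (h ▸ hz), hsF (mem_insert_of_mem hz)⟩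
  have hlink : F.erase v ∈ link K {v} := by
    refine mem_link.2 ⟨hK.2 F hF _ (erase_subset v F) ((hK.1 s hsK).mono hsF'), by simp, ?_⟩
    rwa [← insert_eq, insert_erase hvF]
  rw [hs.2 _ hlink hsF', insert_erase hvF]

lemma isFacet_link_erase (hK : IsComplex K) (hF : IsFacet K F) (hv : v ∈ F)
    (hne : (F.erase v).Nonempty) : IsFacet (link K {v}) (F.erase v) := by
  have hlink : F.erase v ∈ link K {v} := by
    refine mem_link.2 ⟨hK.2 F hF.1 _ (erase_subset v F) hne, by simp, ?_⟩
    rw [← insert_eq, insert_erase hv]; exact hF.1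
  refine ⟨hlink, fun s hs hFs => ?_⟩
  have hFs' : F ⊆ insert v s := by
    rw [← insert_erase hv]; exact insert_subset_insert v hFs
  obtain ⟨-, hvs, hu⟩ := mem_link.1 hs
  rw [← insert_eq] at hu
  rw [hF.2 _ hu hFs', erase_insert (by simpa using hvs)]

end Links

section StrongConnectivity

variable {K : Finset (Finset V)} {n : ℕ} {v : V}

lemma IsPure.link (hK : IsComplex K) (hP : IsPure K (n + 1)) (hv : v ∈ vertexSet K) :
    IsPure (link K {v}) n := by
  obtain ⟨s, hs, hvs⟩ := mem_vertexSet.1 hv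
  obtain ⟨F, hsF, hF⟩ := exists_isFacet_superset hs
  have hvF : v ∈ F := hsF hvs
  have hne : (F.erase v).Nonempty := by
    rw [← card_pos, card_erase_of_mem hvF, hP.2 F hF]; omega
  refine ⟨⟨_, (isFacet_link_erase hK hF hvF hne).1⟩, fun t ht => ?_⟩
  have hvt : v ∉ t := by simpa using (mem_link.1 ht.1).2.1
  have := hP.2 _ (isFacet_insert_of_isFacet_link hK ht)
  rw [card_insert_of_notMem hvt] at this
  omega

def SharesRidge (K : Finset (Finset V)) (n : ℕ) (σ ρ : Finset V) : Prop :=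
  IsFacet K σ ∧ IsFacet K ρ ∧ ∃ τ ∈ K, #τ = n ∧ τ ⊆ σ ∧ τ ⊆ ρ

lemma SharesRidge.insert_of_link (hK : IsComplex K) {σ ρ : Finset V}
    (h : SharesRidge (link K {v}) n σ ρ) : SharesRidge K (n + 1) (insert v σ) (insert v ρ) := by
  obtain ⟨hσ, hρ, τ, hτ, hτc, hτσ, hτρ⟩ := h
  obtain ⟨-, hvτ, hu⟩ := mem_link.1 hτ
  rw [disjoint_singleton_left] at hvτ
  refine ⟨isFacet_insert_of_isFacet_link hK hσ, isFacet_insert_of_isFacet_link hK hρ,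
    insert v τ, by rwa [insert_eq], by rw [card_insert_of_notMem hvτ, hτc],
    insert_subset_insert v hτσ, insert_subset_insert v hτρ⟩

lemma reflTransGen_of_forall_mem {r : Finset V → Finset V → Prop} (hK : IsComplex K)
    (hconn : CConnected K)
    (hr : ∀ v F F', IsFacet K F → IsFacet K F' → v ∈ F → v ∈ F' → ReflTransGen r F F')
    {F F' : Finset V} (hF : IsFacet K F) (hF' : IsFacet K F') : ReflTransGen r F F' := by
  obtain ⟨u, hu⟩ := hK.1 F hF.1
  obtain ⟨u', hu'⟩ := hK.1 F' hF'.1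
  have hreach := (SimpleGraph.reachable_iff_reflTransGen _ _).1 <|
    hconn.2 u (mem_vertexSet.2 ⟨F, hF.1, hu⟩) u' (mem_vertexSet.2 ⟨F', hF'.1, hu'⟩)
  induction hreach using ReflTransGen.head_induction_on generalizing F with
  | refl => exact hr _ F F' hF hF' hu hu'
  | head hadj _ ih =>
    obtain ⟨G, hG, hGf⟩ := exists_isFacet_superset hadj.2
    exact (hr _ F G hF hGf hu (hG (by simp))).trans (ih hGf (hG (by simp)))

theorem reflTransGen_sharesRidge (hn : 1 ≤ n) (hK : IsComplex K) (hP : IsPure K n)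
    (hconn : CConnected K) (hlink : ∀ s ∈ K, #s ≤ n - 1 → CConnected (link K s))
    {F F' : Finset V} (hF : IsFacet K F) (hF' : IsFacet K F') :
    ReflTransGen (SharesRidge K n) F F' := by
  induction n, hn using Nat.le_induction generalizing K F F' with
  | base =>
    refine reflTransGen_of_forall_mem hK hconn (fun v F F' hF hF' hvF hvF' => ?_) hF hF'
    exact .single ⟨hF, hF', {v}, hK.2 F hF.1 _ (by simpa) (by simp), by simp, by simpa,
      by simpa⟩
  | succ n hn ih =>
    refine reflTransGen_of_forall_mem hK hconn (fun v F F' hF hF' hvF hvF' => ?_) hF hF'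
    have hv : v ∈ vertexSet K := mem_vertexSet.2 ⟨F, hF.1, hvF⟩
    have hne : ∀ G, IsFacet K G → v ∈ G → (G.erase v).Nonempty := fun G hG hvG => by
      rw [← card_pos, card_erase_of_mem hvG, hP.2 G hG]; omega
    have hvK : {v} ∈ K := hK.2 F hF.1 _ (by simpa) (by simp)
    have hchain := ih (hK.link {v}) (hP.link hK hv) (hlink {v} hvK (by simp; omega))
      (fun s hs hsc => by
        obtain ⟨-, hvs, hu⟩ := mem_link.1 hs
        rw [disjoint_singleton_left] at hvs
        rw [link_link hK hvs]
        refine hlink _ (by rwa [insert_eq]) ?_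
        rw [card_insert_of_notMem hvs]; omega)
      (isFacet_link_erase hK hF hvF (hne F hF hvF))
      (isFacet_link_erase hK hF' hvF' (hne F' hF' hvF'))
    have hlift := hchain.lift (insert v) fun _ _ h => h.insert_of_link hK
    simp only [Function.onFun] at hlift
    rwa [insert_erase hvF, insert_erase hvF'] at hlift

end StrongConnectivity

lemma Relation.ReflTransGen.exists_first_entry {α : Type*} {r : α → α → Prop} {P : α → Prop}
    {u v : α} (h : ReflTransGen r u v) (hu : ¬P u) (hv : P v) :
    ∃ x c, ¬P x ∧ P c ∧ r x c ∧ ReflTransGen (fun p q => r p q ∧ ¬P p ∧ ¬P q) u x := by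
  induction h using ReflTransGen.head_induction_on with
  | refl => exact absurd hv hu
  | @head u w huw _ ih =>
    by_cases hw : P w
    · exact ⟨u, w, hu, hw, huw, .refl⟩
    · obtain ⟨x, c, hx, hc, hxc, hchain⟩ := ih hw
      exact ⟨x, c, hx, hc, hxc, .head ⟨huw, hu, hw⟩ hchain⟩

namespace SimpleGraph

variable {α : Type*} (G : SimpleGraph α)

lemma even_sum_card_filter_adj (C : Finset α) : Even (∑ u ∈ C, #{w ∈ C | G.Adj u w}) := by
  rw [← ZMod.natCast_eq_zero_iff_even]
  simp only [card_filter, Nat.cast_sum, Nat.cast_ite, Nat.cast_one, Nat.cast_zero,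
    ← sum_product' (f := fun u w => if G.Adj u w then (1 : ZMod 2) else 0)]
  refine sum_involution (fun p _ => p.swap) (fun p _ => ?_) (fun p _ hp => ?_)
    (fun p hp => by simpa [and_comm] using hp) (fun p _ => p.swap_swap)
  · simp only [Prod.fst_swap, Prod.snd_swap, G.adj_comm p.2 p.1]
    split_ifs <;> decide
  · rw [Ne, ite_eq_right_iff, not_forall] at hp
    obtain ⟨hadj, -⟩ := hp
    exact fun h => hadj.ne (congrArg Prod.snd h)

lemma even_card_filter_adj_of_even (C : Finset α) {a : α} (ha : a ∉ C)
    (hdeg : ∀ u ∈ C, Even #{w ∈ insert a C | G.Adj u w}) : Even #{u ∈ C | G.Adj u a} := by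
  have hsplit : ∀ u ∈ C,
      #{w ∈ insert a C | G.Adj u w} = #{w ∈ C | G.Adj u w} + if G.Adj u a then 1 else 0 := by
    intro u _
    rw [filter_insert]
    by_cases h : G.Adj u a
    · rw [if_pos h, if_pos h, card_insert_of_notMem fun h' => ha (mem_filter.1 h').1]
    · rw [if_neg h, if_neg h, add_zero]
  have hsum := even_sum _ hdeg
  rw [sum_congr rfl hsplit, sum_add_distrib, ← card_filter] at hsum
  exact (Nat.even_add.1 hsum).1 (G.even_sum_card_filter_adj C)

lemma mem_of_reachable_of_forall_adj {s : Set α} (hs : ∀ p ∈ s, ∀ q, G.Adj p q → q ∈ s)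
    {u v : α} (huv : G.Reachable u v) (hu : u ∈ s) : v ∈ s := by
  have h := (reachable_iff_reflTransGen u v).1 huv
  clear huv
  induction h with
  | refl => exact hu
  | tail _ hpq ih => exact hs _ ih _ hpq

lemma forall_adj_mem_insert_of_two_regular (S C : Finset α) {a x : α}
    (hS : ∀ p q, G.Adj p q → q ∈ S) (hdeg : ∀ p ∈ S, #{q ∈ S | G.Adj p q} = 2) (hCS : C ⊆ S)
    (ha : a ∉ C) (hclosed : ∀ u ∈ C, ∀ w, G.Adj u w → w ∈ insert a C) (hx : x ∈ C)
    (hxa : G.Adj x a) : ∀ p ∈ insert a C, ∀ q, G.Adj p q → q ∈ insert a C := by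
  -- By the handshake count `a` has an even, positive number of neighbours in `C`: both of them.
  have heven : Even #{u ∈ C | G.Adj u a} := by
    refine G.even_card_filter_adj_of_even C ha fun u hu => ?_
    have : {w ∈ insert a C | G.Adj u w} = {w ∈ S | G.Adj u w} := by
      ext w
      simp only [mem_filter]
      exact ⟨fun h => ⟨hS u w h.2, h.2⟩, fun h => ⟨hclosed u hu w h.2, h.2⟩⟩
    rw [this, hdeg u (hCS hu)]
    exact even_two
  have hsub : {u ∈ C | G.Adj u a} ⊆ {w ∈ S | G.Adj a w} := fun u hu => by
    rw [mem_filter] at hu ⊢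
    exact ⟨hCS hu.1, hu.2.symm⟩
  have hpos : 0 < #{u ∈ C | G.Adj u a} := card_pos.2 ⟨x, mem_filter.2 ⟨hx, hxa⟩⟩
  have heq := eq_of_subset_of_card_le hsub <| by
    rw [hdeg a (hS x a hxa)]
    obtain ⟨k, hk⟩ := heven
    omega
  intro p hp q hpq
  rcases mem_insert.1 hp with rfl | hp
  · have : q ∈ {w ∈ S | G.Adj p w} := mem_filter.2 ⟨hS p q hpq, hpq⟩
    rw [← heq] at this
    exact mem_insert_of_mem (mem_filter.1 this).1
  · exact hclosed p hp q hpq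

lemma exists_adj_reflTransGen_avoiding (S : Finset α) (T : Set α)
    (hS : ∀ p q, G.Adj p q → q ∈ S) (hdeg : ∀ p ∈ S, #{q ∈ S | G.Adj p q} = 2)
    (hconn : ∀ p ∈ S, ∀ q ∈ S, G.Reachable p q) {a b x : α} (ha : a ∈ T) (hb : b ∈ T)
    (hbS : b ∈ S) (hST : ∀ z ∈ S, z ∈ T → z = a ∨ z = b) (hx : G.Adj x a) (hxT : x ∉ T) :
    ∃ y, G.Adj y b ∧ ReflTransGen (fun p q => G.Adj p q ∧ p ∉ T ∧ q ∉ T) x y := by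
  set R := fun p q => G.Adj p q ∧ p ∉ T ∧ q ∉ T
  -- Otherwise the vertices reachable from `x` outside `T`, together with `a`, would form a set
  -- closed under adjacency that misses `b`.
  by_contra! hno
  set C := {z ∈ S | ReflTransGen R x z}
  have hC {z : α} : z ∈ C ↔ z ∈ S ∧ ReflTransGen R x z := mem_filter
  have hxC : x ∈ C := hC.2 ⟨hS a x hx.symm, .refl⟩
  have hCT : ∀ z ∈ C, z ∉ T := fun z hz => by
    rcases (hC.1 hz).2.cases_tail with rfl | ⟨_, _, h⟩
    exacts [hxT, h.2.2]
  have hclosed : ∀ u ∈ C, ∀ w, G.Adj u w → w ∈ insert a C := by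
    intro u hu w huw
    by_cases hw : w ∈ T
    · rcases hST w (hS u w huw) hw with rfl | rfl
      · exact mem_insert_self w C
      · exact absurd (hC.1 hu).2 (hno u huw)
    · exact mem_insert_of_mem (hC.2 ⟨hS u w huw, (hC.1 hu).2.tail ⟨huw, hCT u hu, hw⟩⟩)
  have hbC := G.mem_of_reachable_of_forall_adj (s := ↑(insert a C))
    (G.forall_adj_mem_insert_of_two_regular S C hS hdeg (filter_subset _ S)
      (fun h => hCT a h ha) hclosed hxC hx)
    (hconn x (hC.1 hxC).1 b hbS) (mem_coe.2 (mem_insert_of_mem hxC))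
  rcases mem_insert.1 (mem_coe.1 hbC) with rfl | hbC
  · exact hno x hx .refl
  · exact hCT b hbC hb

end SimpleGraph

section WeakPseudomanifolds

variable {K : Finset (Finset V)} {n : ℕ} {τ : Finset V} {a b p z : V}

lemma IsWeakPM.eq_or_eq_of_insert_mem (hW : IsWeakPM K n) (hτ : τ ∈ K) (hc : #τ = n)
    (ha : a ∉ τ) (hb : b ∉ τ) (hab : a ≠ b) (haK : insert a τ ∈ K) (hbK : insert b τ ∈ K)
    (hz : z ∉ τ) (hzK : insert z τ ∈ K) : z = a ∨ z = b := by
  obtain ⟨x, y, -, -, -, h⟩ := hW.exists_insert_mem_iff hτ hc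
  have := (h a ha).1 haK
  have := (h b hb).1 hbK
  have := (h z hz).1 hzK
  grind

lemma IsWeakPM.card_filter_adj_link (hW : IsWeakPM K n) (hτ : #τ + 1 = n)
    (hp : p ∈ vertexSet (link K τ)) :
    #{q ∈ vertexSet (link K τ) | (edgeGraph (link K τ)).Adj p q} = 2 := by
  obtain ⟨hpτ, hpK⟩ := (mem_vertexSet_link hW.1).1 hp
  obtain ⟨x, y, hxy, hx, hy, hsides⟩ :=
    hW.exists_insert_mem_iff hpK (by rw [card_insert_of_notMem hpτ, hτ])
  have hadj : ∀ q, (edgeGraph (link K τ)).Adj p q ↔ q = x ∨ q = y := by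
    intro q
    rw [edgeGraph_link_adj hW.1, insert_comm]
    constructor
    · rintro ⟨hpq, -, hq, h⟩
      exact (hsides q (by simp [hq, Ne.symm hpq])).1 h
    · intro h
      have hq : q ∉ insert p τ := by rcases h with rfl | rfl <;> assumption
      rw [mem_insert, not_or] at hq
      exact ⟨Ne.symm hq.1, hpτ, hq.2, (hsides q (by simp [hq])).2 h⟩
  rw [← card_pair hxy]
  congr 1
  ext q
  rw [mem_filter, hadj, mem_insert, mem_singleton, and_iff_right_iff_imp]
  exact fun h => mem_vertexSet.2 ⟨_, ((hadj q).2 h).2, by simp⟩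

end WeakPseudomanifolds

section CrossGraph

variable {M : Finset (Finset V)} {A s γ : Finset V} {a b c t x y : V}

lemma pair_mem_crossEdges (hM : IsComplex M) (hs : s ∈ M) (ha : a ∈ s) (hb : b ∈ s)
    (haA : a ∈ A) (hbA : b ∉ A) : {a, b} ∈ crossEdges M A := by
  refine mem_filter.2 ⟨hM.2 s hs _ (insert_subset ha (by simpa)) (by simp),
    card_pair fun h => hbA (h ▸ haA), ?_⟩
  rw [insert_inter_of_mem haA, singleton_inter_of_notMem hbA]; rfl

lemma crossGraph_adj_of_mem (hM : IsComplex M) (hs : s ∈ M) (ha : a ∈ s) (hc : c ∈ s)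
    (hx : x ∈ s) (he : {a, x} ∈ crossEdges M A) (hf : {c, x} ∈ crossEdges M A) (hac : a ≠ c) :
    (crossGraph M A).Adj {a, x} {c, x} := by
  have hax : a ≠ x := card_pair_eq_two_iff.1 (mem_filter.1 he).2.1
  have hcx : c ≠ x := card_pair_eq_two_iff.1 (mem_filter.1 hf).2.1
  have hu : ({a, x} ∪ {c, x} : Finset V) = {a, c, x} := by ext; simp; tauto
  refine ⟨fun h => ?_, he, hf, hM.2 s hs _ ?_ (by simp [hu]), ?_⟩
  · have : a ∈ ({c, x} : Finset V) := h ▸ mem_insert_self a {x}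
    simp [hac, hax] at this
  · rw [hu]; exact insert_subset ha (insert_subset hc (by simpa))
  · rw [hu, card_insert_of_notMem (by simp [hac, hax]), card_pair hcx]

lemma crossGraph_reachable_of_shared_outside (hM : IsComplex M) (hs : s ∈ M) (ha : a ∈ s)
    (hc : c ∈ s) (hx : x ∈ s) (haA : a ∈ A) (hcA : c ∈ A) (hxA : x ∉ A) :
    (crossGraph M A).Reachable {a, x} {c, x} := by
  by_cases hac : a = c
  · rw [hac]
  exact (crossGraph_adj_of_mem hM hs ha hc hx (pair_mem_crossEdges hM hs ha hx haA hxA)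
    (pair_mem_crossEdges hM hs hc hx hcA hxA) hac).reachable

lemma crossGraph_reachable_of_shared_inside (hM : IsComplex M) (hs : s ∈ M) (ht : t ∈ s)
    (hb : b ∈ s) (hc : c ∈ s) (htA : t ∈ A) (hbA : b ∉ A) (hcA : c ∉ A) :
    (crossGraph M A).Reachable {t, b} {t, c} := by
  by_cases hbc : b = c
  · rw [hbc]
  rw [pair_comm t b, pair_comm t c]
  refine (crossGraph_adj_of_mem hM hs hb hc ht ?_ ?_ hbc).reachable
  · rw [pair_comm]; exact pair_mem_crossEdges hM hs ht hb htA hbA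
  · rw [pair_comm]; exact pair_mem_crossEdges hM hs ht hc htA hcA

lemma crossGraph_reachable_of_reflTransGen_link (hM : IsComplex M) (hγA : γ ⊆ A) (ht : t ∈ γ)
    (h : ReflTransGen (fun p q => (edgeGraph (link M γ)).Adj p q ∧ p ∉ A ∧ q ∉ A) x y) :
    (crossGraph M A).Reachable {t, x} {t, y} := by
  induction h with
  | refl => rfl
  | tail _ hpq ih =>
    obtain ⟨hadj, hpA, hqA⟩ := hpq
    obtain ⟨-, -, -, hface⟩ := (edgeGraph_link_adj hM).1 hadj
    exact ih.trans <| crossGraph_reachable_of_shared_inside hM hface (by simp [ht]) (by simp)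
      (by simp) (hγA ht) hpA hqA

end CrossGraph

section SideEdges

variable {d : ℕ} {M : Finset (Finset V)} {A γ σ ρ g : Finset V} {a b x : V}

lemma exists_eq_pair_of_mem_crossEdges (hg : g ∈ crossEdges M A) :
    ∃ a b, a ∈ A ∧ b ∉ A ∧ g = {a, b} := by
  obtain ⟨-, hg2, hgA⟩ := mem_filter.1 hg
  obtain ⟨u, w, huw, rfl⟩ := card_eq_two.1 hg2
  by_cases hu : u ∈ A <;> by_cases hw : w ∈ A
  · simp [insert_inter_of_mem, hu, hw, huw] at hgA
  · exact ⟨u, w, hu, hw, rfl⟩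
  · exact ⟨w, u, hw, hu, pair_comm u w⟩
  · simp [insert_inter_of_notMem, hu, hw] at hgA

lemma exists_reachable_step (hM : IsNormalPM M d) (hN : IsPure (induced M A) (d - 1))
    (hγA : γ ⊆ A) (ha : a ∈ γ) (hbA : b ∉ A) (hbγ : insert b γ ∈ M) (hlt : #γ < d) :
    ∃ c ∉ γ, c ∈ A ∧ ∃ x ∉ A, insert x (insert c γ) ∈ M ∧
      (crossGraph M A).Reachable {a, b} {c, x} := by
  have hMc := hM.1.1
  have hγM : γ ∈ M := hMc.2 _ hbγ γ (subset_insert b γ) ⟨a, ha⟩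
  obtain ⟨σ, hγσ, hσ⟩ := exists_isFacet_superset (mem_induced.2 ⟨hγM, hγA⟩)
  obtain ⟨hσM, hσA⟩ := mem_induced.1 hσ.1
  obtain ⟨a', ha'⟩ : (σ \ γ).Nonempty := by
    rw [← card_pos, card_sdiff_of_subset hγσ, hN.2 σ hσ]; omega
  obtain ⟨ha'σ, ha'γ⟩ := mem_sdiff.1 ha'
  have hb : b ∈ vertexSet (link M γ) :=
    (mem_vertexSet_link hMc).2 ⟨fun h => hbA (hγA h), hbγ⟩
  have ha' : a' ∈ vertexSet (link M γ) :=
    (mem_vertexSet_link hMc).2 ⟨ha'γ, hMc.2 σ hσM _ (insert_subset ha'σ hγσ) (by simp)⟩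
  have hreach := (SimpleGraph.reachable_iff_reflTransGen _ _).1 <|
    (hM.2.2 γ hγM (by omega)).2 b hb a' ha'
  obtain ⟨x, c, hxA, hcA, hxc, hchain⟩ :=
    hreach.exists_first_entry (P := (· ∈ A)) hbA (hσA ha'σ)
  obtain ⟨-, -, hcγ, hface⟩ := (edgeGraph_link_adj hMc).1 hxc
  refine ⟨c, hcγ, hcA, x, hxA, hface, ?_⟩
  exact (crossGraph_reachable_of_reflTransGen_link hMc hγA ha hchain).trans <|
    crossGraph_reachable_of_shared_outside hMc hface (by simp [ha]) (by simp) (by simp)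
      (hγA ha) hcA hxA

lemma exists_reachable_side (hd : 1 ≤ d) (hM : IsNormalPM M d)
    (hN : IsPure (induced M A) (d - 1)) (hγA : γ ⊆ A) (ha : a ∈ γ) (hbA : b ∉ A)
    (hbγ : insert b γ ∈ M) :
    ∃ σ ⊆ A, #σ = d ∧ ∃ a' ∈ σ, ∃ x ∉ A, insert x σ ∈ M ∧
      (crossGraph M A).Reachable {a, b} {a', x} := by
  obtain ⟨k, hk⟩ : ∃ k, d = #γ + k := ⟨d - #γ, by
    have := hN.card_le (mem_induced.2 ⟨hM.1.1.2 _ hbγ γ (subset_insert b γ) ⟨a, ha⟩, hγA⟩)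
    omega⟩
  induction k generalizing γ a b with
  | zero => exact ⟨γ, hγA, hk.symm, a, ha, b, hbA, hbγ, .rfl⟩
  | succ k ih =>
    obtain ⟨c, hcγ, hcA, x, hxA, hx, hreach⟩ :=
      exists_reachable_step hM hN hγA ha hbA hbγ (by omega)
    obtain ⟨σ, hσA, hσ, a', ha', y, hyA, hy, hreach'⟩ := ih (insert_subset hcA hγA)
      (mem_insert_self c γ) hxA hx (by rw [card_insert_of_notMem hcγ]; omega)
    exact ⟨σ, hσA, hσ, a', ha', y, hyA, hy, hreach.trans hreach'⟩

lemma exists_reflTransGen_link_of_ridge (hd : 2 ≤ d) (hM : IsNormalPM M d)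
    (hN : IsWeakPM (induced M A) (d - 1)) {τ : Finset V} {aσ aρ : V} (hτ : τ ∈ induced M A)
    (hτc : #τ = d - 1) (haσ : aσ ∉ τ) (haρ : aρ ∉ τ) (hne : aσ ≠ aρ)
    (hσ : insert aσ τ ∈ induced M A) (hρ : insert aρ τ ∈ induced M A) (hxA : x ∉ A)
    (hx : insert x (insert aσ τ) ∈ M) :
    ∃ y ∉ A, insert y (insert aρ τ) ∈ M ∧
      ReflTransGen (fun p q => (edgeGraph (link M τ)).Adj p q ∧ p ∉ A ∧ q ∉ A) x y := by
  have hMc := hM.1.1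
  obtain ⟨hτM, hτA⟩ := mem_induced.1 hτ
  obtain ⟨-, hσA⟩ := mem_induced.1 hσ
  obtain ⟨hρM, hρA⟩ := mem_induced.1 hρ
  -- The link of `τ` in `M` is a cycle whose only vertices in `A` are `aσ` and `aρ`.
  have hS : ∀ p q, (edgeGraph (link M τ)).Adj p q → q ∈ vertexSet (link M τ) :=
    fun p q h => mem_vertexSet.2 ⟨_, h.2, by simp⟩
  have hST : ∀ z ∈ vertexSet (link M τ), z ∈ (A : Set V) → z = aσ ∨ z = aρ := by
    intro z hz hzA
    obtain ⟨hzτ, hzM⟩ := (mem_vertexSet_link hMc).1 hz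
    exact hN.eq_or_eq_of_insert_mem hτ hτc haσ haρ hne hσ hρ hzτ
      (mem_induced.2 ⟨hzM, insert_subset hzA hτA⟩)
  have hxσ : (edgeGraph (link M τ)).Adj x aσ :=
    (edgeGraph_link_adj hMc).2 ⟨fun h => hxA (h ▸ hσA (mem_insert_self aσ τ)),
      fun h => hxA (hτA h), haσ, hx⟩
  obtain ⟨y, hy, hchain⟩ := SimpleGraph.exists_adj_reflTransGen_avoiding _ _ _ hS
    (fun p hp => hM.1.card_filter_adj_link (by omega) hp) (hM.2.2 τ hτM (by omega)).2
    (hσA (mem_insert_self aσ τ)) (hρA (mem_insert_self aρ τ))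
    ((mem_vertexSet_link hMc).2 ⟨haρ, hρM⟩) hST hxσ hxA
  obtain ⟨hyρ, -, -, hyM⟩ := (edgeGraph_link_adj hMc).1 hy
  refine ⟨y, fun hyA => ?_, hyM, hchain⟩
  rcases hST y (hS _ _ hy.symm) hyA with rfl | rfl
  · have := hN.2.1.card_le (mem_induced.2 ⟨hyM, insert_subset hyA hρA⟩)
    rw [card_insert_of_notMem (by simp [hyρ, haσ]), card_insert_of_notMem haρ] at this
    omega
  · exact hyρ rfl

lemma exists_reachable_of_sharesRidge (hd : 2 ≤ d) (hM : IsNormalPM M d)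
    (hN : IsWeakPM (induced M A) (d - 1)) (h : SharesRidge (induced M A) (d - 1) σ ρ)
    (ha : a ∈ σ) (hxA : x ∉ A) (hx : insert x σ ∈ M) :
    ∃ a' ∈ ρ, ∃ y ∉ A, insert y ρ ∈ M ∧ (crossGraph M A).Reachable {a, x} {a', y} := by
  obtain ⟨hσ, hρ, τ, hτ, hτc, hτσ, hτρ⟩ := h
  by_cases hσρ : σ = ρ
  · exact ⟨a, hσρ ▸ ha, x, hxA, hσρ ▸ hx, .rfl⟩
  obtain ⟨aσ, haσ, rfl⟩ := exists_eq_insert_iff.2 ⟨hτσ, by rw [hN.2.1.2 σ hσ, hτc]⟩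
  obtain ⟨aρ, haρ, rfl⟩ := exists_eq_insert_iff.2 ⟨hτρ, by rw [hN.2.1.2 ρ hρ, hτc]⟩
  obtain ⟨y, hyA, hy, hchain⟩ := exists_reflTransGen_link_of_ridge hd hM hN hτ hτc haσ haρ
    (fun h => hσρ (h ▸ rfl)) hσ.1 hρ.1 hxA hx
  obtain ⟨-, hτA⟩ := mem_induced.1 hτ
  obtain ⟨t, ht⟩ : τ.Nonempty := by rw [← card_pos]; omega
  refine ⟨t, mem_insert_of_mem ht, y, hyA, hy, ?_⟩
  exact (crossGraph_reachable_of_shared_outside hM.1.1 hx (mem_insert_of_mem ha)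
    (by simp [ht]) (by simp) ((mem_induced.1 hσ.1).2 ha) (hτA ht) hxA).trans
    (crossGraph_reachable_of_reflTransGen_link hM.1.1 hτA ht hchain)

lemma exists_reachable_of_reflTransGen (hd : 2 ≤ d) (hM : IsNormalPM M d)
    (hN : IsWeakPM (induced M A) (d - 1))
    (h : ReflTransGen (SharesRidge (induced M A) (d - 1)) σ ρ)
    (ha : a ∈ σ) (hxA : x ∉ A) (hx : insert x σ ∈ M) :
    ∃ a' ∈ ρ, ∃ y ∉ A, insert y ρ ∈ M ∧ (crossGraph M A).Reachable {a, x} {a', y} := by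
  induction h with
  | refl => exact ⟨a, ha, x, hxA, hx, .rfl⟩
  | tail _ hstep ih =>
    obtain ⟨a', ha', y, hyA, hy, hreach⟩ := ih
    obtain ⟨a'', ha'', z, hzA, hz, hreach'⟩ :=
      exists_reachable_of_sharesRidge hd hM hN hstep ha' hyA hy
    exact ⟨a'', ha'', z, hzA, hz, hreach.trans hreach'⟩

lemma exists_reachable_of_isFacet (hd : 2 ≤ d) (hM : IsNormalPM M d)
    (hN : IsNormalPM (induced M A) (d - 1)) (hσ : IsFacet (induced M A) σ)
    (hg : g ∈ crossEdges M A) :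
    ∃ a ∈ σ, ∃ y ∉ A, insert y σ ∈ M ∧ (crossGraph M A).Reachable g {a, y} := by
  obtain ⟨a, b, haA, hbA, rfl⟩ := exists_eq_pair_of_mem_crossEdges hg
  obtain ⟨ρ, hρA, hρc, a', ha', x, hxA, hx, hreach⟩ := exists_reachable_side (by omega) hM
    hN.1.2.1 (singleton_subset_iff.2 haA) (mem_singleton_self a) hbA
    (pair_comm a b ▸ (mem_filter.1 hg).1)
  have hρ : IsFacet (induced M A) ρ := hN.1.2.1.isFacet_of_card
    (mem_induced.2 ⟨hM.1.1.2 _ hx ρ (subset_insert x ρ) ⟨a', ha'⟩, hρA⟩) (by omega)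
  obtain ⟨a'', ha'', y, hyA, hy, hreach'⟩ := exists_reachable_of_reflTransGen hd hM hN.1
    (reflTransGen_sharesRidge (by omega) hN.1.1 hN.1.2.1 hN.2.1 hN.2.2 hρ hσ) ha' hxA hx
  exact ⟨a'', ha'', y, hyA, hy, hreach.trans hreach'⟩

end SideEdges

theorem stmt5_general {V : Type} [DecidableEq V] (d : ℕ) (hd : 2 ≤ d)
    (M : Finset (Finset V)) (A : Finset V)
    (hM : IsNormalPM M d)
    (hN : IsNormalPM (induced M A) (d - 1)) :
    ∃ e f : Finset V, ∀ g ∈ crossEdges M A,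
      (crossGraph M A).Reachable g e ∨ (crossGraph M A).Reachable g f := by
  obtain ⟨s, hs⟩ := hN.1.2.1.1
  obtain ⟨σ₀, -, hσ₀⟩ := exists_isFacet_superset hs
  obtain ⟨hσ₀M, hσ₀A⟩ := mem_induced.1 hσ₀.1
  obtain ⟨x₁, x₂, -, -, -, hsides⟩ :=
    hM.1.exists_insert_mem_iff hσ₀M (by rw [hN.1.2.1.2 σ₀ hσ₀]; omega)
  obtain ⟨a₀, ha₀⟩ := hM.1.1.1 σ₀ hσ₀M
  refine ⟨{a₀, x₁}, {a₀, x₂}, fun g hg => ?_⟩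
  obtain ⟨a, ha, y, hyA, hy, hreach⟩ := exists_reachable_of_isFacet hd hM hN hσ₀ hg
  have hside := crossGraph_reachable_of_shared_outside hM.1.1 hy (mem_insert_of_mem ha)
    (mem_insert_of_mem ha₀) (mem_insert_self y σ₀) (hσ₀A ha) (hσ₀A ha₀) hyA
  rcases (hsides y fun h => hyA (hσ₀A h)).1 hy with rfl | rfl
  exacts [.inl (hreach.trans hside), .inr (hreach.trans hside)]

/-- If `M[A]` is a `(d-1)`-dimensional normal pseudomanifold induced in the normal
`d`-pseudomanifold `M` (`d ≥ 2`), then the graph on the edges of `M` with exactly one end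
in `A` (adjacency: the union is a 2-face of `M`) has at most two connected components. -/
theorem stmt5 {V : Type} [DecidableEq V] (d : ℕ) (hd : 2 ≤ d)
    (M : Finset (Finset V)) (A : Finset V)
    (hM : IsNormalPM M d) (hA : A ⊆ vertexSet M)
    (hN : IsNormalPM (induced M A) (d - 1)) :
    ∃ e f : Finset V, ∀ g ∈ crossEdges M A,
      (crossGraph M A).Reachable g e ∨ (crossGraph M A).Reachable g f :=
  stmt5_general d hd M A hM hN
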